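/- arXiv:2405.06069 — 5 statements merged into one kernel-verified Lean document; each statement's English description precedes it below -/
import Mathlib

section
/- Special case of Sylvester's identity: Let A be an n-by-n real matrix (n ≥ 2), A_22 = A[{2,...,n-1}], B = A[{1,...,n-1},{1,...,n-1}], C = A[{1,...,n-1},{2,...,n}], D = A[{2,...,n},{1,...,n-1}], E = A[{2,...,n},{2,...,n}]. Then det(B)·det(E) − det(C)·det(D) = det(A_22)·det(A). -/
/-!
Jacobi's complementary minor theorem: if the indices split as `S ⊔ T` and `N` is the identity
with its `S`-columns replaced by those of `adj A`, then `A * N` is block triangular with diagonal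
blocks `det A • 1` and `A[T]`, so `det A * det (adj A)[S] = (det A) ^ |S| * det A[T]`.
Cancelling one factor `det A` is legitimate for the generic matrix, whose determinant is a
nonzero polynomial, and the resulting identity specialises to every matrix. For `S = {1, n}` the
`2 × 2` matrix `(adj A)[S]` consists of cofactors, which are the four corner minors up to sign.
-/

open Matrix

open Matrix

/-- `A` is totally positive: every minor (with strictly increasing row and
column index selections) is positive. -/
def IsTP {α β : Type} [LinearOrder α] [LinearOrder β] (A : Matrix α β ℝ) : Prop :=
  ∀ (l : ℕ) (r : Fin l → α) (c : Fin l → β), StrictMono r → StrictMono c →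
    0 < (A.submatrix r c).det

/-- `A` is `TP_k`: every minor of order at most `k` is positive. -/
def IsTPk {α β : Type} [LinearOrder α] [LinearOrder β] (A : Matrix α β ℝ) (k : ℕ) : Prop :=
  ∀ (l : ℕ), l ≤ k → ∀ (r : Fin l → α) (c : Fin l → β), StrictMono r → StrictMono c →
    0 < (A.submatrix r c).det

/-- `k`-subsets of `{1,…,n}`, encoded as strictly increasing tuples. -/
abbrev STuple (n k : ℕ) : Type := {f : Fin k → Fin n // StrictMono f}

noncomputable instance lexPi {n k : ℕ} : LinearOrder (Lex (Fin k → Fin n)) :=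
  @Pi.Lex.linearOrder (Fin k) (fun _ => Fin n) _
    Finite.to_wellFoundedLT _

/-- The lexicographic linear order on `k`-subsets. -/
noncomputable instance {n k : ℕ} : LinearOrder (STuple n k) :=
  LinearOrder.lift' (fun s => toLex s.1) (fun _ _ h => Subtype.ext (congrArg ofLex h))

/-- The `k`-th compound matrix of `A`: the matrix of all `k×k` minors of `A`,
rows and columns indexed by `k`-subsets ordered lexicographically. -/
noncomputable def compound {n : ℕ} (A : Matrix (Fin n) (Fin n) ℝ) (k : ℕ) :
    Matrix (STuple n k) (STuple n k) ℝ :=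
  fun s t => (A.submatrix s.1 t.1).det

/-- The `k`-th Dodgson condensation matrix of `A`: the `(n-k) × (n-k)` matrix of
contiguous minors of order `k+1` (0-indexed positions). -/
noncomputable def Dmat {n : ℕ} (A : Matrix (Fin n) (Fin n) ℝ) (k : ℕ) :
    Matrix (Fin (n - k)) (Fin (n - k)) ℝ :=
  fun i j =>
    (A.submatrix
      (fun p : Fin (k + 1) => (⟨i.1 + p.1, by have := i.2; have := p.2; omega⟩ : Fin n))
      (fun p : Fin (k + 1) => (⟨j.1 + p.1, by have := j.2; have := p.2; omega⟩ : Fin n))).det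

/-- The contiguous minor of `A` of order `sz` with top-left position `(i, j)`
(0-indexed): `det A[{i,…,i+sz-1},{j,…,j+sz-1}]`. -/
noncomputable def cminor {n : ℕ} (A : Matrix (Fin n) (Fin n) ℝ) (sz i j : ℕ)
    (hi : i + sz ≤ n) (hj : j + sz ≤ n) : ℝ :=
  (A.submatrix (fun p : Fin sz => (⟨i + p.1, by have := p.2; omega⟩ : Fin n))
               (fun p : Fin sz => (⟨j + p.1, by have := p.2; omega⟩ : Fin n))).det

noncomputable def finEndsSumEquiv (m : ℕ) : Fin 2 ⊕ Fin m ≃ Fin (m + 2) :=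
  Equiv.ofBijective (Sum.elim ![0, Fin.last (m + 1)] fun j => j.succ.castSucc) <| by
    refine (Fintype.bijective_iff_injective_and_card _).mpr ⟨?_, by simp [add_comm]⟩
    rintro (i | i) (j | j) h
    · fin_cases i <;> fin_cases j <;> simp_all [Fin.ext_iff]
    · fin_cases i <;> simp [Fin.ext_iff] at h
      omega
    · fin_cases j <;> simp [Fin.ext_iff] at h
      omega
    · simpa [Fin.ext_iff] using h

namespace Matrix

variable {R : Type*} [CommRing R]

section Complement

variable {k l n : Type*} [Fintype k] [Fintype l] [Fintype n] [DecidableEq k] [DecidableEq l]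
  [DecidableEq n]

theorem mul_fromBlocks_adjugate_toBlocks (A : Matrix (k ⊕ l) (k ⊕ l) R) :
    A * fromBlocks (adjugate A).toBlocks₁₁ 0 (adjugate A).toBlocks₂₁ 1
      = fromBlocks (A.det • 1) A.toBlocks₁₂ 0 A.toBlocks₂₂ := by
  have h : fromBlocks A.toBlocks₁₁ A.toBlocks₁₂ A.toBlocks₂₁ A.toBlocks₂₂ *
      fromBlocks (adjugate A).toBlocks₁₁ (adjugate A).toBlocks₁₂
        (adjugate A).toBlocks₂₁ (adjugate A).toBlocks₂₂
      = fromBlocks (A.det • 1) 0 0 (A.det • 1) := by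
    simp only [fromBlocks_toBlocks, mul_adjugate, ← fromBlocks_one, fromBlocks_smul, smul_zero]
  rw [fromBlocks_multiply] at h
  obtain ⟨h₁₁, -, h₂₁, -⟩ := fromBlocks_inj.mp h
  conv_lhs => arg 1; rw [← fromBlocks_toBlocks A]
  rw [fromBlocks_multiply, h₁₁, h₂₁]
  simp only [Matrix.mul_zero, Matrix.mul_one, zero_add]

theorem det_mul_det_adjugate_toBlocks₁₁ (A : Matrix (k ⊕ l) (k ⊕ l) R) :
    A.det * (adjugate A).toBlocks₁₁.det = A.det ^ Fintype.card k * A.toBlocks₂₂.det := by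
  have h := congrArg det (mul_fromBlocks_adjugate_toBlocks A)
  rwa [det_mul, det_fromBlocks_zero₁₂, det_fromBlocks_zero₂₁, det_one, mul_one, det_smul, det_one,
    mul_one] at h

theorem det_adjugate_toBlocks₁₁ [Nonempty k] (A : Matrix (k ⊕ l) (k ⊕ l) R) :
    (adjugate A).toBlocks₁₁.det = A.det ^ (Fintype.card k - 1) * A.toBlocks₂₂.det := by
  let X := mvPolynomialX (k ⊕ l) (k ⊕ l) ℤ
  let f := MvPolynomial.aeval (R := ℤ) fun p : (k ⊕ l) × (k ⊕ l) => A p.1 p.2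
  suffices (adjugate X).toBlocks₁₁.det = X.det ^ (Fintype.card k - 1) * X.toBlocks₂₂.det by
    rw [← mvPolynomialX_mapMatrix_aeval ℤ A, ← AlgHom.map_adjugate]
    change (f.mapMatrix (adjugate X).toBlocks₁₁).det
      = (f.mapMatrix X).det ^ _ * (f.mapMatrix X.toBlocks₂₂).det
    rw [← AlgHom.map_det, ← AlgHom.map_det, ← AlgHom.map_det, ← map_pow, ← map_mul, this]
  apply mul_left_cancel₀ (det_mvPolynomialX_ne_zero (k ⊕ l) ℤ)
  rw [det_mul_det_adjugate_toBlocks₁₁, ← mul_assoc, ← pow_succ',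
    Nat.sub_add_cancel Fintype.card_pos]

theorem det_adjugate_submatrix_comp_inl [Nonempty k] (σ : k ⊕ l ≃ n) (A : Matrix n n R) :
    ((adjugate A).submatrix (σ ∘ Sum.inl) (σ ∘ Sum.inl)).det
      = A.det ^ (Fintype.card k - 1) * (A.submatrix (σ ∘ Sum.inr) (σ ∘ Sum.inr)).det := by
  have h := det_adjugate_toBlocks₁₁ (A.submatrix σ σ)
  rwa [adjugate_submatrix_equiv_self, det_submatrix_equiv_self] at h

end Complement

variable {m : ℕ}

theorem adjugate_zero_zero (A : Matrix (Fin (m + 1)) (Fin (m + 1)) R) :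
    adjugate A 0 0 = (A.submatrix Fin.succ Fin.succ).det := by
  simp [adjugate_fin_succ_eq_det_submatrix]

theorem adjugate_last_last (A : Matrix (Fin (m + 1)) (Fin (m + 1)) R) :
    adjugate A (Fin.last m) (Fin.last m) = (A.submatrix Fin.castSucc Fin.castSucc).det := by
  simp [adjugate_fin_succ_eq_det_submatrix, Fin.succAbove_last]

theorem adjugate_zero_last (A : Matrix (Fin (m + 1)) (Fin (m + 1)) R) :
    adjugate A 0 (Fin.last m) = (-1) ^ m * (A.submatrix Fin.castSucc Fin.succ).det := by
  simp [adjugate_fin_succ_eq_det_submatrix, Fin.succAbove_last]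

theorem adjugate_last_zero (A : Matrix (Fin (m + 1)) (Fin (m + 1)) R) :
    adjugate A (Fin.last m) 0 = (-1) ^ m * (A.submatrix Fin.succ Fin.castSucc).det := by
  simp [adjugate_fin_succ_eq_det_submatrix, Fin.succAbove_last]

theorem desnanot_jacobi (A : Matrix (Fin (m + 2)) (Fin (m + 2)) R) :
    (A.submatrix Fin.castSucc Fin.castSucc).det * (A.submatrix Fin.succ Fin.succ).det
      - (A.submatrix Fin.castSucc Fin.succ).det * (A.submatrix Fin.succ Fin.castSucc).det
      = (A.submatrix (fun i : Fin m => i.succ.castSucc) fun i => i.succ.castSucc).det * A.det := by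
  have h := det_adjugate_submatrix_comp_inl (finEndsSumEquiv m) A
  have hinr : finEndsSumEquiv m ∘ Sum.inr = fun i => i.succ.castSucc := rfl
  have hinl : (adjugate A).submatrix (finEndsSumEquiv m ∘ Sum.inl)
      (finEndsSumEquiv m ∘ Sum.inl) = !![adjugate A 0 0, adjugate A 0 (Fin.last _);
        adjugate A (Fin.last _) 0, adjugate A (Fin.last _) (Fin.last _)] := by
    ext i j
    fin_cases i <;> fin_cases j <;> rfl
  have hsign : (-1 : R) ^ (m + 1) * (-1) ^ (m + 1) = 1 := by
    rw [← pow_add, Even.neg_one_pow ⟨_, rfl⟩]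
  rw [hinl, hinr, det_fin_two_of, adjugate_zero_zero, adjugate_last_last, adjugate_zero_last,
    adjugate_last_zero, Fintype.card_fin, pow_one] at h
  linear_combination h + (A.submatrix Fin.castSucc Fin.succ).det
    * (A.submatrix Fin.succ Fin.castSucc).det * hsign

end Matrix

/-- **Special case of Sylvester's identity:**
`det B · det E − det C · det D = det A₂₂ · det A`, where `B, C, D, E` are the
four `(n-1)×(n-1)` corner contiguous submatrices and `A₂₂` is the central
`(n-2)×(n-2)` submatrix (the matrix has size `n = m + 2 ≥ 2`). -/
theorem sylvester_special_case {m : ℕ} (A : Matrix (Fin (m + 2)) (Fin (m + 2)) ℝ) :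
    (A.submatrix Fin.castSucc Fin.castSucc).det * (A.submatrix Fin.succ Fin.succ).det
      - (A.submatrix Fin.castSucc Fin.succ).det * (A.submatrix Fin.succ Fin.castSucc).det
      = (A.submatrix (fun i : Fin m => (⟨i.1 + 1, by have := i.2; omega⟩ : Fin (m + 2)))
                     (fun j : Fin m => (⟨j.1 + 1, by have := j.2; omega⟩ : Fin (m + 2)))).det
        * A.det :=
  A.desnanot_jacobi
end

section
/- For an n-by-n real matrix A, the entries of the kth Dodgson condensation matrix D_k(A) are the contiguous minors of order k+1: the (i,j) entry of D_k(A) equals det A[{i,i+1,...,i+k},{j,j+1,...,j+k}] for 1 ≤ i,j ≤ n-k (assuming all intermediate contiguous minors used as divisors are nonzero). -/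
open Matrix

open Matrix

/-- Entry of `A` at (0-indexed) natural positions, `0` out of range. -/
noncomputable def ent {n : ℕ} (A : Matrix (Fin n) (Fin n) ℝ) (i j : ℕ) : ℝ :=
  if h : i < n ∧ j < n then A ⟨i, h.1⟩ ⟨j, h.2⟩ else 0

/-- `condm A k i j` is the `(i,j)` entry (0-indexed) of the `k`-th Dodgson
condensation matrix of `A`, defined recursively by Dodgson's algorithm. -/
noncomputable def condm {n : ℕ} (A : Matrix (Fin n) (Fin n) ℝ) : ℕ → ℕ → ℕ → ℝ
  | 0, i, j => ent A i j
  | 1, i, j => ent A i j * ent A (i + 1) (j + 1) - ent A i (j + 1) * ent A (i + 1) j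
  | (k + 2), i, j =>
      (condm A (k + 1) i j * condm A (k + 1) (i + 1) (j + 1)
        - condm A (k + 1) i (j + 1) * condm A (k + 1) (i + 1) j) / condm A k (i + 1) (j + 1)

/-!
Induction on `k`: the step of Dodgson's recursion is the Desnanot–Jacobi identity
`det M · det M° = det M↖ · det M↘ - det M↗ · det M↙` for the contiguous block `M` of order `k + 1`,
where `M°` is its interior of order `k - 1` and the arrows denote its four corner blocks of order `k`.
The identity itself comes from the Schur complement `S = D - C E⁻¹ B` of the interior `E`:
`det M = det E · det S`, and each corner block has determinant `det E` times the matching entry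
of the `2 × 2` matrix `S`. Reordering the corners so that the interior comes first costs the same
sign on the two anti-diagonal corners, so it cancels in their product.
-/

namespace Matrix

variable {ι κ R : Type*} [Fintype ι] [DecidableEq ι] [CommRing R]

def bordered (M : Matrix (ι ⊕ κ) (ι ⊕ κ) R) (a b : κ) : Matrix (ι ⊕ Unit) (ι ⊕ Unit) R :=
  M.submatrix (Sum.map id fun _ => a) (Sum.map id fun _ => b)

theorem det_bordered [Fintype κ] (M : Matrix (ι ⊕ κ) (ι ⊕ κ) R) [Invertible M.toBlocks₁₁]
    (a b : κ) :
    (M.bordered a b).det = M.toBlocks₁₁.det *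
      (M.toBlocks₂₂ - M.toBlocks₂₁ * ⅟M.toBlocks₁₁ * M.toBlocks₁₂) a b := by
  have hblocks : M.bordered a b = fromBlocks M.toBlocks₁₁ (M.toBlocks₁₂.submatrix id fun _ => b)
      (M.toBlocks₂₁.submatrix (fun _ => a) id)
      (M.toBlocks₂₂.submatrix (fun _ => a) fun _ => b) := by
    ext (x | x) (y | y) <;> rfl
  rw [hblocks, det_fromBlocks₁₁, det_unique (M.toBlocks₂₂.submatrix _ _ - _)]
  rfl

/-- Sylvester's identity for a border of size two (the Desnanot–Jacobi identity). -/
theorem det_mul_det_toBlocks₁₁ (M : Matrix (ι ⊕ Fin 2) (ι ⊕ Fin 2) R)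
    (hE : IsUnit M.toBlocks₁₁.det) :
    M.det * M.toBlocks₁₁.det = (M.bordered 0 0).det * (M.bordered 1 1).det
      - (M.bordered 0 1).det * (M.bordered 1 0).det := by
  let := M.toBlocks₁₁.invertibleOfIsUnitDet hE
  have hM : M.det = M.toBlocks₁₁.det *
      (M.toBlocks₂₂ - M.toBlocks₂₁ * ⅟M.toBlocks₁₁ * M.toBlocks₁₂).det := by
    conv_lhs => rw [← fromBlocks_toBlocks M]
    exact det_fromBlocks₁₁ _ _ _ _
  rw [hM, det_bordered, det_bordered, det_bordered, det_bordered, det_fin_two]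
  ring

theorem det_submatrix_mul_det_submatrix_swap {α β : Type*} [Fintype α] [DecidableEq α]
    [Fintype β] [DecidableEq β] (e₁ e₂ : α ≃ β) (N N' : Matrix β β R) :
    (N.submatrix e₁ e₂).det * (N'.submatrix e₂ e₁).det = N.det * N'.det := by
  set σ : Equiv.Perm α := e₁.trans e₂.symm
  have h₁ : N.submatrix e₁ e₂ = (N.submatrix e₂ e₂).submatrix σ id := by ext; simp [σ]
  have h₂ : N'.submatrix e₂ e₁ = (N'.submatrix e₂ e₂).submatrix id σ := by ext; simp [σ]
  have hsign : ((Equiv.Perm.sign σ : ℤ) : R) * (Equiv.Perm.sign σ : ℤ) = 1 := by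
    rw [← Int.cast_mul, ← Units.val_mul, Int.units_mul_self, Units.val_one, Int.cast_one]
  rw [h₁, h₂, det_permute, det_permute', det_submatrix_equiv_self, det_submatrix_equiv_self]
  linear_combination (N.det * N'.det) * hsign

end Matrix

noncomputable def interiorSumBorderEquiv (m : ℕ) : Fin m ⊕ Fin 2 ≃ Fin (m + 2) :=
  Equiv.ofBijective (Sum.elim (fun p => p.castSucc.succ) ![0, Fin.last _]) <| by
    refine (Fintype.bijective_iff_injective_and_card _).2 ⟨?_, by simp⟩
    rintro (p | a) (q | b) h <;> (try fin_cases a) <;> (try fin_cases b) <;>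
      simp [Fin.ext_iff] at h ⊢ <;> omega

@[simp]
theorem interiorSumBorderEquiv_inl {m : ℕ} (p : Fin m) :
    (interiorSumBorderEquiv m (Sum.inl p) : ℕ) = p + 1 := rfl

@[simp]
theorem interiorSumBorderEquiv_inr_zero (m : ℕ) :
    (interiorSumBorderEquiv m (Sum.inr 0) : ℕ) = 0 := rfl

@[simp]
theorem interiorSumBorderEquiv_inr_one (m : ℕ) :
    (interiorSumBorderEquiv m (Sum.inr 1) : ℕ) = m + 1 := rfl

section ContiguousMinor

variable {n : ℕ} (A : Matrix (Fin n) (Fin n) ℝ) {α : Type*}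

noncomputable def csubmatrix (sz i j : ℕ) (hi : i + sz ≤ n) (hj : j + sz ≤ n) :
    Matrix (Fin sz) (Fin sz) ℝ :=
  A.submatrix (fun p => ⟨i + p, by omega⟩) (fun p => ⟨j + p, by omega⟩)

theorem submatrix_eq_csubmatrix_submatrix {sz i j : ℕ} (hi : i + sz ≤ n) (hj : j + sz ≤ n)
    {r c : α → Fin n} {e₁ e₂ : α → Fin sz} (hr : ∀ x, (r x : ℕ) = i + e₁ x)
    (hc : ∀ x, (c x : ℕ) = j + e₂ x) :
    A.submatrix r c = (csubmatrix A sz i j hi hj).submatrix e₁ e₂ := by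
  ext x y
  simp only [csubmatrix, submatrix_apply]
  congr 1 <;> ext
  exacts [hr x, hc y]

theorem det_submatrix_eq_cminor [Fintype α] [DecidableEq α] {sz i j : ℕ}
    (hi : i + sz ≤ n) (hj : j + sz ≤ n) {r c : α → Fin n} (e : α ≃ Fin sz)
    (hr : ∀ x, (r x : ℕ) = i + e x) (hc : ∀ x, (c x : ℕ) = j + e x) :
    (A.submatrix r c).det = cminor A sz i j hi hj := by
  rw [submatrix_eq_csubmatrix_submatrix A hi hj hr hc, det_submatrix_equiv_self]
  rfl

theorem det_submatrix_mul_det_submatrix_eq_cminor_mul_cminor [Fintype α] [DecidableEq α]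
    {sz i j i' j' : ℕ}
    (hi : i + sz ≤ n) (hj : j + sz ≤ n) (hi' : i' + sz ≤ n) (hj' : j' + sz ≤ n)
    {r c r' c' : α → Fin n} (e₁ e₂ : α ≃ Fin sz)
    (hr : ∀ x, (r x : ℕ) = i + e₁ x) (hc : ∀ x, (c x : ℕ) = j + e₂ x)
    (hr' : ∀ x, (r' x : ℕ) = i' + e₂ x) (hc' : ∀ x, (c' x : ℕ) = j' + e₁ x) :
    (A.submatrix r c).det * (A.submatrix r' c').det
      = cminor A sz i j hi hj * cminor A sz i' j' hi' hj' := by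
  rw [submatrix_eq_csubmatrix_submatrix A hi hj hr hc,
    submatrix_eq_csubmatrix_submatrix A hi' hj' hr' hc',
    Matrix.det_submatrix_mul_det_submatrix_swap]
  rfl

theorem cminor_desnanot_jacobi (m i j : ℕ) (hi : i + (m + 2) ≤ n) (hj : j + (m + 2) ≤ n)
    (hE : cminor A m (i + 1) (j + 1) (by omega) (by omega) ≠ 0) :
    cminor A (m + 2) i j hi hj * cminor A m (i + 1) (j + 1) (by omega) (by omega)
      = cminor A (m + 1) i j (by omega) (by omega)
          * cminor A (m + 1) (i + 1) (j + 1) (by omega) (by omega)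
        - cminor A (m + 1) i (j + 1) (by omega) (by omega)
          * cminor A (m + 1) (i + 1) j (by omega) (by omega) := by
  let e := interiorSumBorderEquiv m
  -- the top corners list their border row or column first, the bottom ones last
  let f₀ : Fin m ⊕ Unit ≃ Fin (m + 1) :=
    (Equiv.optionEquivSumPUnit _).symm.trans (finSuccEquiv m).symm
  let f₁ : Fin m ⊕ Unit ≃ Fin (m + 1) :=
    (Equiv.optionEquivSumPUnit _).symm.trans finSuccEquivLast.symm
  let r : Fin m ⊕ Fin 2 → Fin n := fun x => ⟨i + e x, by have := (e x).isLt; omega⟩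
  let c : Fin m ⊕ Fin 2 → Fin n := fun x => ⟨j + e x, by have := (e x).isLt; omega⟩
  let M := A.submatrix r c
  have hM : M.det = cminor A (m + 2) i j hi hj :=
    det_submatrix_eq_cminor A hi hj e (fun _ => rfl) (fun _ => rfl)
  have hinterior : M.toBlocks₁₁.det = cminor A m (i + 1) (j + 1) (by omega) (by omega) :=
    det_submatrix_eq_cminor A (r := r ∘ Sum.inl) (c := c ∘ Sum.inl) _ _ (Equiv.refl _)
      (fun p => show i + (p + 1) = i + 1 + p by omega)
      (fun p => show j + (p + 1) = j + 1 + p by omega)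
  have hr₀ : ∀ x, (r (Sum.map id (fun _ => 0) x) : ℕ) = i + f₀ x := by
    rintro (p | _) <;> simp [r, e, f₀]
  have hc₀ : ∀ x, (c (Sum.map id (fun _ => 0) x) : ℕ) = j + f₀ x := by
    rintro (p | _) <;> simp [c, e, f₀]
  have hr₁ : ∀ x, (r (Sum.map id (fun _ => 1) x) : ℕ) = (i + 1) + f₁ x := by
    rintro (p | _) <;> simp [r, e, f₁] <;> omega
  have hc₁ : ∀ x, (c (Sum.map id (fun _ => 1) x) : ℕ) = (j + 1) + f₁ x := by
    rintro (p | _) <;> simp [c, e, f₁] <;> omega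
  have h00 : (M.bordered 0 0).det = cminor A (m + 1) i j (by omega) (by omega) :=
    det_submatrix_eq_cminor A _ _ f₀ hr₀ hc₀
  have h11 : (M.bordered 1 1).det = cminor A (m + 1) (i + 1) (j + 1) (by omega) (by omega) :=
    det_submatrix_eq_cminor A _ _ f₁ hr₁ hc₁
  have hcross : (M.bordered 0 1).det * (M.bordered 1 0).det
      = cminor A (m + 1) i (j + 1) (by omega) (by omega)
        * cminor A (m + 1) (i + 1) j (by omega) (by omega) :=
    det_submatrix_mul_det_submatrix_eq_cminor_mul_cminor A _ _ _ _ f₀ f₁ hr₀ hc₁ hr₁ hc₀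
  rw [← hM, ← hinterior, ← h00, ← h11, ← hcross]
  exact M.det_mul_det_toBlocks₁₁ (hinterior ▸ hE.isUnit)

end ContiguousMinor

section Condensation

variable {n : ℕ} (A : Matrix (Fin n) (Fin n) ℝ)

theorem ent_eq {i j : ℕ} (hi : i < n) (hj : j < n) : ent A i j = A ⟨i, hi⟩ ⟨j, hj⟩ :=
  dif_pos ⟨hi, hj⟩

theorem cminor_one (i j : ℕ) (hi : i + 1 ≤ n) (hj : j + 1 ≤ n) :
    cminor A 1 i j hi hj = ent A i j := by
  rw [cminor, det_unique, ent_eq A hi hj]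
  rfl

theorem cminor_two (i j : ℕ) (hi : i + 2 ≤ n) (hj : j + 2 ≤ n) :
    cminor A 2 i j hi hj
      = ent A i j * ent A (i + 1) (j + 1) - ent A i (j + 1) * ent A (i + 1) j := by
  rw [cminor, det_fin_two, ent_eq A (by omega) (by omega), ent_eq A (by omega) (by omega),
    ent_eq A (by omega) (by omega), ent_eq A (by omega) (by omega)]
  rfl

end Condensation

/-- The entries of the `k`-th Dodgson condensation matrix are the contiguous
minors of order `k+1`, provided all intermediate contiguous minors used as
divisors are nonzero. -/
theorem condm_eq_contiguous_minor {n k : ℕ} (A : Matrix (Fin n) (Fin n) ℝ)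
    (hdiv : ∀ (l i j : ℕ), 1 ≤ l → l + 1 ≤ k → ∀ (hi : i + l ≤ n) (hj : j + l ≤ n),
      cminor A l i j hi hj ≠ 0)
    (i j : ℕ) (hi : i + k + 1 ≤ n) (hj : j + k + 1 ≤ n) :
    condm A k i j = cminor A (k + 1) i j (by omega) (by omega) := by
  induction k using Nat.twoStepInduction generalizing i j with
  | zero => exact (cminor_one A i j _ _).symm
  | one => exact (cminor_two A i j _ _).symm
  | more k ih₀ ih₁ =>
    have ih₀ := ih₀ fun l i j h₁ h₂ ↦ hdiv l i j h₁ (by omega)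
    have ih₁ := ih₁ fun l i j h₁ h₂ ↦ hdiv l i j h₁ (by omega)
    have hE := hdiv (k + 1) (i + 1) (j + 1) (by omega) (by omega) (by omega) (by omega)
    rw [condm, ih₁ i j (by omega) (by omega), ih₁ (i + 1) (j + 1) (by omega) (by omega),
      ih₁ i (j + 1) (by omega) (by omega), ih₁ (i + 1) j (by omega) (by omega),
      ih₀ (i + 1) (j + 1) (by omega) (by omega)]
    exact (eq_div_of_mul_eq hE (cminor_desnanot_jacobi A (k + 1) i j _ _ hE)).symm
end

section
/- Theorem A: Let n ≥ 4 and 2 ≤ k ≤ n-2. If an n-by-n real matrix A is TP_{k+2}, then the kth compound C_k(A) is not TP_3. -/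
open Matrix

open Matrix

/-!
Write `k = m + 2`, `I = {0,…,m-1}` and `P = A[I, I]`, which is invertible because `A` is
`TP_m`. For `α, β ⊆ {0,1,2,3}` of size 2 the Schur complement formula gives
`det A[I ∪ (m + α), I ∪ (m + β)] = det P · det G[α, β]`, where `G` is the Schur complement of `P`
in `A[{0,…,m+3}, {0,…,m+3}]`. Hence a suitable `3 × 3` submatrix of `C_k(A)` is `det P` times
a `3 × 3` submatrix of `C_2(G)` whose row subsets `{0,1}, {0,2}, {0,3}` share the index `0`, and
such a minor of a second compound vanishes identically. So `C_k(A)` has a zero minor of order 3.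
-/

namespace Matrix

variable {ι κ R : Type*} {m m' r s : ℕ}

theorem submatrix_append_append (A : Matrix ι κ R) (p : Fin m → ι) (u : Fin r → ι)
    (p' : Fin m' → κ) (v : Fin s → κ) :
    A.submatrix (Fin.append p u) (Fin.append p' v) =
      (fromBlocks (A.submatrix p p') (A.submatrix p v) (A.submatrix u p')
        (A.submatrix u v)).submatrix finSumFinEquiv.symm finSumFinEquiv.symm := by
  ext i j
  induction i using Fin.addCases <;> induction j using Fin.addCases <;> simp

variable [CommRing R]

/-- The Schur complement of the block `A[p, p']` in `A[p ⊕ q, p' ⊕ q']`. -/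
noncomputable def schurComplement (A : Matrix ι κ R) (p : Fin m → ι) (p' : Fin m → κ)
    (q : Fin r → ι) (q' : Fin s → κ) : Matrix (Fin r) (Fin s) R :=
  A.submatrix q q' - A.submatrix q p' * (A.submatrix p p')⁻¹ * A.submatrix p q'

theorem det_submatrix_append_append (A : Matrix ι κ R) (p : Fin m → ι) (p' : Fin m → κ)
    (q : Fin r → ι) (q' : Fin s → κ) {l : ℕ} (α : Fin l → Fin r) (β : Fin l → Fin s)
    (hp : IsUnit (A.submatrix p p').det) :
    (A.submatrix (Fin.append p (q ∘ α)) (Fin.append p' (q' ∘ β))).det =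
      (A.submatrix p p').det * ((schurComplement A p p' q q').submatrix α β).det := by
  let := invertibleOfIsUnitDet _ hp
  rw [submatrix_append_append, det_submatrix_equiv_self, det_fromBlocks₁₁,
    invOf_eq_nonsing_inv]
  rfl

end Matrix

theorem Fin.strictMono_append {α : Type*} [Preorder α] {m r : ℕ} {p : Fin m → α}
    {u : Fin r → α} (hp : StrictMono p) (hu : StrictMono u) (h : ∀ i j, p i < u j) :
    StrictMono (Fin.append p u) := by
  intro i j hij
  induction i using Fin.addCases <;> induction j using Fin.addCases
  · simpa using hp ((Fin.strictMono_castAdd r).lt_iff_lt.mp hij)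
  · simpa using h _ _
  · simp only [Fin.lt_def, Fin.val_natAdd, Fin.val_castAdd] at hij
    omega
  · simpa using hu ((Fin.strictMono_natAdd m).lt_iff_lt.mp hij)

theorem Fin.strictMono_append_comp {α : Type*} [Preorder α] {m r l : ℕ} (p : Fin m → α)
    {q : Fin r → α} (hq : StrictMono q) :
    StrictMono fun u : Fin l → Fin r => Fin.append p (q ∘ u) := by
  intro u v huv
  rw [Pi.lt_def] at huv ⊢
  obtain ⟨hle, i, hi⟩ := huv
  refine ⟨fun j => ?_, Fin.natAdd m i, by simpa using hq hi⟩
  induction j using Fin.addCases <;> simp [hq.monotone (hle _)]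

namespace STuple

variable {n m r l : ℕ} (h : m + r ≤ n)

def prefixEmb : Fin m → Fin n := Fin.castLE (Nat.le_of_add_right_le h)

def shiftEmb : Fin r → Fin n := Fin.castLE h ∘ Fin.natAdd m

theorem strictMono_shiftEmb : StrictMono (shiftEmb h) :=
  (Fin.strictMono_castLE h).comp (Fin.strictMono_natAdd m)

/-- The `(m + l)`-subset `{0, …, m-1} ∪ (m + s)` of `Fin n`, for an `l`-subset `s` of `Fin r`. -/
def extendByPrefix (s : STuple r l) : STuple n (m + l) :=
  ⟨Fin.append (prefixEmb h) (shiftEmb h ∘ s.1),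
    Fin.strictMono_append (Fin.strictMono_castLE _) ((strictMono_shiftEmb h).comp s.2)
      (fun i j => by simp only [prefixEmb, shiftEmb, Fin.lt_def, Fin.val_castLE, Fin.val_natAdd,
        Function.comp]; omega)⟩

theorem strictMono_extendByPrefix_comp {ι : Type*} [Preorder ι] {f : ι → STuple r l}
    (hf : StrictMono fun i => (f i).1) : StrictMono fun i => (extendByPrefix h (f i)).1 :=
  (Fin.strictMono_append_comp _ (strictMono_shiftEmb h)).comp hf

theorem submatrix_compound_extendByPrefix {ι : Type*} (A : Matrix (Fin n) (Fin n) ℝ)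
    (hA : IsUnit (A.submatrix (prefixEmb h) (prefixEmb h)).det) (rows cols : ι → STuple r l) :
    (compound A (m + l)).submatrix (extendByPrefix h ∘ rows) (extendByPrefix h ∘ cols) =
      (A.submatrix (prefixEmb h) (prefixEmb h)).det •
        (compound (A.schurComplement (prefixEmb h) (prefixEmb h) (shiftEmb h) (shiftEmb h)) l
          ).submatrix rows cols := by
  ext i j
  exact A.det_submatrix_append_append _ _ _ _ (rows i).1 (cols j).1 hA

end STuple

theorem IsTPk.det_submatrix_compound_pos {n k l : ℕ} {A : Matrix (Fin n) (Fin n) ℝ}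
    (hC : IsTPk (compound A k) l) {r c : Fin l → STuple n k}
    (hr : StrictMono fun i => (r i).1) (hc : StrictMono fun i => (c i).1) :
    0 < ((compound A k).submatrix r c).det :=
  hC l le_rfl r c (fun _ _ h => Pi.toLex_strictMono (hr h))
    (fun _ _ h => Pi.toLex_strictMono (hc h))

def rowPair : Fin 3 → STuple 4 2 :=
  ![⟨![0, 1], by decide⟩, ⟨![0, 2], by decide⟩, ⟨![0, 3], by decide⟩]

def colPair : Fin 3 → STuple 4 2 :=
  ![⟨![0, 1], by decide⟩, ⟨![0, 2], by decide⟩, ⟨![1, 2], by decide⟩]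

theorem strictMono_rowPair : StrictMono fun i => (rowPair i).1 := by
  simp only [Fin.strictMono_iff_lt_succ, Fin.forall_fin_two, Pi.lt_def, Pi.le_def]
  decide

theorem strictMono_colPair : StrictMono fun i => (colPair i).1 := by
  simp only [Fin.strictMono_iff_lt_succ, Fin.forall_fin_two, Pi.lt_def, Pi.le_def]
  decide

/-- Row `{0, j}` of this matrix is `g₀ ∧ gⱼ`, for `gᵢ` the rows of `G` restricted to the columns
`{0, 1, 2}`; all three rows lie in the two-dimensional space `g₀ ∧ ℝ³`. -/
theorem det_submatrix_compound_rowPair_colPair (G : Matrix (Fin 4) (Fin 4) ℝ) :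
    ((compound G 2).submatrix rowPair colPair).det = 0 := by
  simp only [det_fin_three, submatrix_apply, compound, det_fin_two]
  simp only [rowPair, colPair, Fin.isValue, cons_val_zero, cons_val_one, cons_val_fin_one,
    cons_val]
  ring

theorem compound_not_TP3_general {n k : ℕ} (hk2 : 2 ≤ k) (hkn : k ≤ n - 2)
    (A : Matrix (Fin n) (Fin n) ℝ) (hA : IsTPk A (k + 2)) :
    ¬ IsTPk (compound A k) 3 := by
  intro hC
  obtain ⟨m, rfl⟩ : ∃ m, k = m + 2 := ⟨k - 2, by omega⟩
  have hmn : m + 4 ≤ n := by omega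
  have hP : 0 < (A.submatrix (STuple.prefixEmb hmn) (STuple.prefixEmb hmn)).det :=
    hA m (by omega) _ _ (Fin.strictMono_castLE _) (Fin.strictMono_castLE _)
  have hpos := hC.det_submatrix_compound_pos (r := STuple.extendByPrefix hmn ∘ rowPair)
    (c := STuple.extendByPrefix hmn ∘ colPair)
    (STuple.strictMono_extendByPrefix_comp hmn strictMono_rowPair)
    (STuple.strictMono_extendByPrefix_comp hmn strictMono_colPair)
  rw [STuple.submatrix_compound_extendByPrefix hmn A hP.ne'.isUnit, det_smul,
    det_submatrix_compound_rowPair_colPair, mul_zero] at hpos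
  exact hpos.false

/-- **Theorem A.** Let `n ≥ 4` and `2 ≤ k ≤ n-2`. If `A` is `TP_{k+2}`, then the
`k`-th compound `C_k(A)` is not `TP₃`. -/
theorem compound_not_TP3 {n k : ℕ} (hn : 4 ≤ n) (hk2 : 2 ≤ k) (hkn : k ≤ n - 2)
    (A : Matrix (Fin n) (Fin n) ℝ) (hA : IsTPk A (k + 2)) :
    ¬ IsTPk (compound A k) 3 :=
  compound_not_TP3_general hk2 hkn A hA
end

section
/- The minor identity M^{(k+1)}_{i,j} · M^{(k-1)}_{i+1,j+1} = M^{(k)}_{i,j} M^{(k)}_{i+1,j+1} − M^{(k)}_{i,j+1} M^{(k)}_{i+1,j}, where M^{(k)}_{i,j} = det A[{i,...,i+k},{j,...,j+k}], holds for any n-by-n real matrix A and valid indices. -/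
open Matrix

open Matrix

/-! Multiplying `B` by the identity matrix with its `k`-columns replaced by those of `adj B`
gives a block-triangular matrix, whence `det B * det (adj B)₁₁ = det B ^ |k| * det B₂₂`;
cancelling `det B` for the generic matrix gives Jacobi's complementary minor theorem. For the
two end indices of `Fin (s + 2)` the entries of `adj B` are, up to a common sign, the four
corner minors of order `s + 1`, which is the Desnanot–Jacobi identity; all minors in the
theorem are minors of a single contiguous window of order `s + 2`. -/

namespace Matrix

section Jacobi

variable {R k m : Type*} [CommRing R] [Fintype k] [Fintype m] [DecidableEq k] [DecidableEq m]

theorem mul_fromBlocks_adjugate (B : Matrix (k ⊕ m) (k ⊕ m) R) :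
    B * fromBlocks B.adjugate.toBlocks₁₁ 0 B.adjugate.toBlocks₂₁ 1 =
      fromBlocks (B.det • 1) B.toBlocks₁₂ 0 B.toBlocks₂₂ := by
  ext x (b | b)
  · have h := congr_fun (congr_fun (mul_adjugate B) x) (.inl b)
    rcases x with a | a <;>
      simpa [mul_apply, Fintype.sum_sum_type, one_apply, toBlocks₁₁, toBlocks₂₁] using h
  · rcases x with a | a <;>
      simp [mul_apply, Fintype.sum_sum_type, one_apply, toBlocks₁₂, toBlocks₂₂]

theorem det_mul_det_adjugate_toBlocks₁₁_s13 (B : Matrix (k ⊕ m) (k ⊕ m) R) :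
    B.det * B.adjugate.toBlocks₁₁.det = B.det ^ Fintype.card k * B.toBlocks₂₂.det := by
  simpa [det_fromBlocks_zero₁₂, det_fromBlocks_zero₂₁, det_smul] using
    congr_arg det (mul_fromBlocks_adjugate B)

/-- Jacobi's complementary minor theorem. -/
theorem det_adjugate_toBlocks₁₁_s13 [Nonempty k] (B : Matrix (k ⊕ m) (k ⊕ m) R) :
    B.adjugate.toBlocks₁₁.det = B.det ^ (Fintype.card k - 1) * B.toBlocks₂₂.det := by
  let X := mvPolynomialX (k ⊕ m) (k ⊕ m) ℤ
  suffices X.adjugate.toBlocks₁₁.det = X.det ^ (Fintype.card k - 1) * X.toBlocks₂₂.det by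
    have h := congr_arg (MvPolynomial.aeval fun p : (k ⊕ m) × (k ⊕ m) => B p.1 p.2) this
    rw [← mvPolynomialX_mapMatrix_aeval ℤ B, ← AlgHom.map_adjugate]
    simp only [map_mul, map_pow, AlgHom.map_det] at h
    exact h
  apply mul_left_cancel₀ (det_mvPolynomialX_ne_zero (k ⊕ m) ℤ)
  rw [det_mul_det_adjugate_toBlocks₁₁_s13, ← mul_assoc, ← pow_succ',
    Nat.sub_add_cancel Fintype.card_pos]

end Jacobi

noncomputable def finEndsSumInterior (s : ℕ) : Fin 2 ⊕ Fin s ≃ Fin (s + 2) :=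
  .ofBijective (Sum.elim ![0, Fin.last (s + 1)] (Fin.succ ∘ Fin.castSucc)) <| by
    refine (Fintype.bijective_iff_injective_and_card _).2 ⟨?_, by simp [add_comm]⟩
    refine .sumElim ?_ ((Fin.succ_injective _).comp (Fin.castSucc_injective _)) ?_
    · intro a b h
      fin_cases a <;> fin_cases b <;> simp_all [Fin.ext_iff]
    · intro a l
      fin_cases a
      · exact (Fin.succ_ne_zero _).symm
      · simp only [Fin.mk_one, cons_val_one, cons_val_fin_one, Function.comp_apply, ne_eq,
          Fin.ext_iff, Fin.val_last, Fin.val_succ, Fin.val_castSucc, Nat.add_right_cancel_iff]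
        omega

theorem desnanot_jacobi_s13 {R : Type*} [CommRing R] {s : ℕ}
    (B : Matrix (Fin (s + 2)) (Fin (s + 2)) R) :
    B.det * (B.submatrix (Fin.succ ∘ Fin.castSucc) (Fin.succ ∘ Fin.castSucc)).det =
      (B.submatrix Fin.castSucc Fin.castSucc).det * (B.submatrix Fin.succ Fin.succ).det -
        (B.submatrix Fin.castSucc Fin.succ).det * (B.submatrix Fin.succ Fin.castSucc).det := by
  let e := finEndsSumInterior s
  have interior : (B.submatrix e e).toBlocks₂₂ =
      B.submatrix (Fin.succ ∘ Fin.castSucc) (Fin.succ ∘ Fin.castSucc) := rfl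
  have ends (a b : Fin 2) : (B.adjugate.submatrix e e).toBlocks₁₁ a b =
      B.adjugate (![0, Fin.last _] a) (![0, Fin.last _] b) := rfl
  have h := det_adjugate_toBlocks₁₁_s13 (B.submatrix e e)
  rw [adjugate_submatrix_equiv_self, det_submatrix_equiv_self, det_fin_two, ends, ends, ends, ends,
    interior] at h
  simp only [cons_val_zero, cons_val_one, cons_val_fin_one, adjugate_fin_succ_eq_det_submatrix,
    Fin.val_zero, Fin.val_last, Fin.succAbove_zero, Fin.succAbove_last, add_zero, zero_add,
    pow_zero, one_mul, Even.add_self, Even.neg_pow, one_pow, Fintype.card_fin] at h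
  have sign_sq : ((-1 : R) ^ (s + 1)) * (-1) ^ (s + 1) = 1 := by
    rw [← mul_pow, neg_one_mul, neg_neg, one_pow]
  linear_combination -h - (B.submatrix Fin.castSucc Fin.succ).det *
    (B.submatrix Fin.succ Fin.castSucc).det * sign_sq

end Matrix

def contiguousSubmatrix {α : Type*} {n : ℕ} (A : Matrix (Fin n) (Fin n) α) (sz i j : ℕ)
    (hi : i + sz ≤ n) (hj : j + sz ≤ n) : Matrix (Fin sz) (Fin sz) α :=
  A.submatrix (fun p => ⟨i + p, by omega⟩) (fun p => ⟨j + p, by omega⟩)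

theorem cminor_eq_det_submatrix_contiguousSubmatrix {n sz i j sz' i' j' : ℕ}
    (A : Matrix (Fin n) (Fin n) ℝ) (hi : i + sz ≤ n) (hj : j + sz ≤ n) (hi' : i' + sz' ≤ n)
    (hj' : j' + sz' ≤ n) (r c : Fin sz' → Fin sz) (hr : ∀ p, i + r p = i' + p)
    (hc : ∀ p, j + c p = j' + p) :
    cminor A sz' i' j' hi' hj' = ((contiguousSubmatrix A sz i j hi hj).submatrix r c).det := by
  unfold cminor contiguousSubmatrix
  rw [submatrix_submatrix]
  congr 2 <;> funext p <;>
    exact Fin.ext (by simp only [Function.comp_apply, hr, hc])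

/-- Here `cminor A (k + 1)` is `M⁽ᵏ⁾`; for `s = 0` the convention `M⁽⁻¹⁾ = 1` is the empty
determinant `cminor A 0 = 1`. -/
theorem contiguous_minor_identity {n s : ℕ} (A : Matrix (Fin n) (Fin n) ℝ)
    (i j : ℕ) (hi : i + s + 2 ≤ n) (hj : j + s + 2 ≤ n) :
    cminor A (s + 2) i j hi hj * cminor A s (i + 1) (j + 1) (by omega) (by omega)
      = cminor A (s + 1) i j (by omega) (by omega)
          * cminor A (s + 1) (i + 1) (j + 1) (by omega) (by omega)
        - cminor A (s + 1) i (j + 1) (by omega) (by omega)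
          * cminor A (s + 1) (i + 1) j (by omega) (by omega) := by
  convert Matrix.desnanot_jacobi_s13 (contiguousSubmatrix A (s + 2) i j hi hj) using 3
  · rfl
  all_goals
    apply cminor_eq_det_submatrix_contiguousSubmatrix <;> intro p <;>
      simp only [Function.comp_apply, Fin.val_succ, Fin.val_castSucc] <;> omega
end

section
/- Corollary: Let A be an n-by-n real matrix that is TP_k for some 1 ≤ k ≤ n-2. If the (k+1)st compound C_{k+1}(A) is TP_2, then A is TP_{k+2}. -/
open Matrix

open Matrix

/-
For minors of order at most `k` there is nothing to prove, and a minor of order `k + 1` is an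
entry of `C_{k+1}(A)`, hence positive. For a minor `det M` of order `k + 2`, the
Desnanot–Jacobi identity
  `det M · det M_int = det M₁₁ · det M₂₂ - det M₁₂ · det M₂₁`,
where `M_int` deletes the first and last rows and columns and `M_ij` deletes one of them on each
side, exhibits `det M` times a positive minor of order `k` as a `2 × 2` minor of `C_{k+1}(A)`
(lexicographically ordered rows and columns), which is positive.

When `M_int` is invertible, Desnanot–Jacobi is the Schur complement formula: moving the two
outer indices to the end, each `det M_ij` is `det M_int` times an entry of the `2 × 2` Schur
complement of `M_int`, whose determinant is `det M / det M_int`.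
-/

namespace Matrix

variable {R : Type*} [CommRing R] {m : Type*} [Fintype m] [DecidableEq m]

def border (i : Fin 2) : m ⊕ Fin 1 → m ⊕ Fin 2 := Sum.map id fun _ => i

theorem det_submatrix_border (M : Matrix (m ⊕ Fin 2) (m ⊕ Fin 2) R) [Invertible M.toBlocks₁₁]
    (i j : Fin 2) :
    det (M.submatrix (border i) (border j)) = det M.toBlocks₁₁ *
      (M.toBlocks₂₂ - M.toBlocks₂₁ * ⅟M.toBlocks₁₁ * M.toBlocks₁₂) i j := by
  have : M.submatrix (border i) (border j) = fromBlocks M.toBlocks₁₁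
      (M.toBlocks₁₂.submatrix id fun _ => j) (M.toBlocks₂₁.submatrix (fun _ => i) id)
      (M.toBlocks₂₂.submatrix (fun _ => i) fun _ => j) := by
    ext (a | a) (b | b) <;> rfl
  rw [this, det_fromBlocks₁₁, det_unique (n := Fin 1)]
  simp [Matrix.mul_apply]

theorem det_mul_det_toBlocks₁₁_s18 (M : Matrix (m ⊕ Fin 2) (m ⊕ Fin 2) R) [Invertible M.toBlocks₁₁] :
    det M * det M.toBlocks₁₁ =
      det (M.submatrix (border 0) (border 0)) * det (M.submatrix (border 1) (border 1)) -
      det (M.submatrix (border 0) (border 1)) * det (M.submatrix (border 1) (border 0)) := by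
  conv_lhs => rw [← fromBlocks_toBlocks M, det_fromBlocks₁₁, det_fin_two]
  simp only [det_submatrix_border, toBlocks_fromBlocks₁₁]
  ring

theorem det_submatrix_mul_det_submatrix {ι n : Type*} [Fintype ι] [DecidableEq ι] [Fintype n]
    [DecidableEq n] (e₁ e₂ : ι ≃ n) (A B : Matrix n n R) :
    det (A.submatrix e₁ e₂) * det (B.submatrix e₂ e₁) = det A * det B := by
  rw [← det_mul, submatrix_mul_equiv, det_submatrix_equiv_self, det_mul]

def interiorBorderEquiv (k : ℕ) : Fin k ⊕ Fin 2 ≃ Fin (k + 2) :=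
  finSumFinEquiv.trans (Fin.cycleRange (Fin.castSucc (Fin.last k)))

theorem interiorBorderEquiv_inl {k : ℕ} (i : Fin k) :
    interiorBorderEquiv k (Sum.inl i) = i.castSucc.succ := by
  ext
  simp only [interiorBorderEquiv, Equiv.trans_apply, finSumFinEquiv_apply_left]
  rw [Fin.coe_cycleRange_of_lt (by simp [Fin.lt_def])]
  simp

theorem interiorBorderEquiv_inr_zero {k : ℕ} : interiorBorderEquiv k (Sum.inr 0) = 0 :=
  Fin.cycleRange_self _

theorem interiorBorderEquiv_inr_one {k : ℕ} :
    interiorBorderEquiv k (Sum.inr 1) = Fin.last (k + 1) :=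
  Fin.cycleRange_of_gt (Fin.castSucc_lt_last _)

theorem interiorBorderEquiv_comp_border_zero {k : ℕ} :
    interiorBorderEquiv k ∘ border 0 =
      Fin.castSucc ∘ finSumFinEquiv.trans (finRotate (k + 1)) := by
  ext1 (i | i)
  · ext; simp [border, interiorBorderEquiv_inl, Fin.val_add_one, Fin.ext_iff, i.isLt.ne]
  · ext
    simp [border, interiorBorderEquiv_inr_zero, Fin.fin_one_eq_zero i, Fin.val_add_one, Fin.ext_iff]

theorem interiorBorderEquiv_comp_border_one {k : ℕ} :
    interiorBorderEquiv k ∘ border 1 = Fin.succ ∘ finSumFinEquiv := by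
  ext1 (i | i)
  · ext; simp [border, interiorBorderEquiv_inl]
  · ext; simp [border, interiorBorderEquiv_inr_one, Fin.fin_one_eq_zero i]

theorem desnanot_jacobi_s18 {k : ℕ} (M : Matrix (Fin (k + 2)) (Fin (k + 2)) R)
    (h : IsUnit (M.submatrix (Fin.succ ∘ Fin.castSucc) (Fin.succ ∘ Fin.castSucc)).det) :
    det M * det (M.submatrix (Fin.succ ∘ Fin.castSucc) (Fin.succ ∘ Fin.castSucc)) =
      det (M.submatrix Fin.castSucc Fin.castSucc) * det (M.submatrix Fin.succ Fin.succ) -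
      det (M.submatrix Fin.castSucc Fin.succ) * det (M.submatrix Fin.succ Fin.castSucc) := by
  set M' := M.submatrix (interiorBorderEquiv k) (interiorBorderEquiv k)
  have hinterior : M'.toBlocks₁₁ =
      M.submatrix (Fin.succ ∘ Fin.castSucc) (Fin.succ ∘ Fin.castSucc) := by
    ext i j; simp [M', toBlocks₁₁, interiorBorderEquiv_inl]
  have : Invertible M'.toBlocks₁₁ := invertibleOfIsUnitDet _ (hinterior ▸ h)
  rw [← det_submatrix_equiv_self (interiorBorderEquiv k) M, ← hinterior, det_mul_det_toBlocks₁₁_s18]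
  simp only [submatrix_submatrix, interiorBorderEquiv_comp_border_zero,
    interiorBorderEquiv_comp_border_one]
  simp only [← submatrix_submatrix, det_submatrix_equiv_self, det_submatrix_mul_det_submatrix]

end Matrix

theorem IsTPk.mono {α β : Type} [LinearOrder α] [LinearOrder β] {A : Matrix α β ℝ} {k l : ℕ}
    (hA : IsTPk A k) (hlk : l ≤ k) : IsTPk A l :=
  fun l' hl' => hA l' (hl'.trans hlk)

theorem toLex_comp_castSucc_lt_toLex_comp_succ {n m : ℕ} {g : Fin (m + 2) → Fin n}
    (hg : StrictMono g) : toLex (g ∘ Fin.castSucc) < toLex (g ∘ Fin.succ) :=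
  ⟨0, fun j hj => absurd hj (Fin.not_lt_zero j), hg (Fin.castSucc_lt_succ (i := 0))⟩

-- Stated for a `LinearOrder` so that on `STuple` it refers to the lexicographic order, not to the
-- pointwise order that instance search finds first on the subtype.
theorem strictMono_vecCons_pair {α : Type*} [LinearOrder α] {a b : α} (h : a < b) :
    StrictMono ![a, b] :=
  strictMono_vecCons.2 ⟨h, strictMono_vecEmpty⟩

variable {n m : ℕ} {A : Matrix (Fin n) (Fin n) ℝ}

theorem det_submatrix_pos_of_compound_TP1 (hC : IsTPk (compound A m) 1) {r c : Fin m → Fin n}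
    (hr : StrictMono r) (hc : StrictMono c) : 0 < det (A.submatrix r c) := by
  simpa [compound, det_unique] using hC 1 le_rfl (fun _ => ⟨r, hr⟩) (fun _ => ⟨c, hc⟩)
    (fun a b hab => (hab.ne (Subsingleton.elim a b)).elim)
    (fun a b hab => (hab.ne (Subsingleton.elim a b)).elim)

theorem compound_two_minor_pos (hC : IsTPk (compound A (m + 1)) 2)
    {r c : Fin (m + 2) → Fin n} (hr : StrictMono r) (hc : StrictMono c) :
    0 < det (A.submatrix (r ∘ Fin.castSucc) (c ∘ Fin.castSucc)) *
        det (A.submatrix (r ∘ Fin.succ) (c ∘ Fin.succ)) -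
      det (A.submatrix (r ∘ Fin.castSucc) (c ∘ Fin.succ)) *
        det (A.submatrix (r ∘ Fin.succ) (c ∘ Fin.castSucc)) := by
  have := hC 2 le_rfl _ _
    (strictMono_vecCons_pair (a := ⟨_, hr.comp Fin.strictMono_castSucc⟩)
      (b := ⟨_, hr.comp Fin.strictMono_succ⟩) (toLex_comp_castSucc_lt_toLex_comp_succ hr))
    (strictMono_vecCons_pair (a := ⟨_, hc.comp Fin.strictMono_castSucc⟩)
      (b := ⟨_, hc.comp Fin.strictMono_succ⟩) (toLex_comp_castSucc_lt_toLex_comp_succ hc))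
  rw [det_fin_two] at this
  simpa [compound] using this

theorem det_pos_of_TPk_of_compound_TP2 {k : ℕ} (hA : IsTPk A k)
    (hC : IsTPk (compound A (k + 1)) 2)
    {r c : Fin (k + 2) → Fin n} (hr : StrictMono r) (hc : StrictMono c) :
    0 < det (A.submatrix r c) := by
  have hinterior := hA k le_rfl _ _ (hr.comp (Fin.strictMono_succ.comp Fin.strictMono_castSucc))
    (hc.comp (Fin.strictMono_succ.comp Fin.strictMono_castSucc))
  have hDJ := desnanot_jacobi_s18 (A.submatrix r c)
    (by simpa [submatrix_submatrix] using hinterior.ne'.isUnit)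
  simp only [submatrix_submatrix] at hDJ
  have := compound_two_minor_pos hC hr hc
  exact (mul_pos_iff_of_pos_right hinterior).mp (hDJ ▸ this)

theorem TPkplus2_of_compound_TP2_general {n k : ℕ}
    (A : Matrix (Fin n) (Fin n) ℝ) (hA : IsTPk A k)
    (hC : IsTPk (compound A (k + 1)) 2) : IsTPk A (k + 2) := by
  intro l hl r c hr hc
  obtain hlk | rfl | rfl : l ≤ k ∨ l = k + 1 ∨ l = k + 2 := by omega
  · exact hA l hlk r c hr hc
  · exact det_submatrix_pos_of_compound_TP1 (hC.mono one_le_two) hr hc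
  · exact det_pos_of_TPk_of_compound_TP2 hA hC hr hc

/-- **Corollary.** Let `A` be `TP_k` for some `1 ≤ k ≤ n-2`. If `C_{k+1}(A)` is
`TP₂`, then `A` is `TP_{k+2}`. -/
theorem TPkplus2_of_compound_TP2 {n k : ℕ} (hk1 : 1 ≤ k) (hk2 : k ≤ n - 2)
    (A : Matrix (Fin n) (Fin n) ℝ) (hA : IsTPk A k)
    (hC : IsTPk (compound A (k + 1)) 2) : IsTPk A (k + 2) :=
  TPkplus2_of_compound_TP2_general A hA hC
end
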